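/- The Baxter equivalence relation is compatible with the destandardization process: for words u, v in A*, u ≡_B v if and only if std(u) ≡_B std(v) and eval(u) = eval(v). -/

import Mathlib

open scoped Classical

/-- Baxter adjacency relations on words over the alphabet of natural numbers. -/
def BaxterAdj (w w' : List ℕ) : Prop :=
  (∃ (a b c d : ℕ) (u v : List ℕ), a ≤ b ∧ b < c ∧ c ≤ d ∧
      w = c :: (u ++ a :: d :: (v ++ [b])) ∧ w' = c :: (u ++ d :: a :: (v ++ [b]))) ∨
  (∃ (a b c d : ℕ) (u v : List ℕ), a < b ∧ b ≤ c ∧ c < d ∧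
      w = b :: (u ++ d :: a :: (v ++ [c])) ∧ w' = b :: (u ++ a :: d :: (v ++ [c])))

/-- One rewriting step: an adjacency applied inside a word (congruence context). -/
def BaxterStep (w w' : List ℕ) : Prop :=
  ∃ (p s u v : List ℕ), BaxterAdj u v ∧ w = p ++ u ++ s ∧ w' = p ++ v ++ s

/-- The Baxter congruence: the equivalence generated by the Baxter steps. -/
def BaxterEquiv : List ℕ → List ℕ → Prop := Relation.EqvGen BaxterStep

/-- Sylvester adjacency: a c u b ≡ c a u b when a ≤ b < c. -/
def SylvAdj (w w' : List ℕ) : Prop :=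
  ∃ (a b c : ℕ) (u : List ℕ), a ≤ b ∧ b < c ∧
    w = a :: c :: (u ++ [b]) ∧ w' = c :: a :: (u ++ [b])

def SylvStep (w w' : List ℕ) : Prop :=
  ∃ (p s u v : List ℕ), SylvAdj u v ∧ w = p ++ u ++ s ∧ w' = p ++ v ++ s

def SylvEquiv : List ℕ → List ℕ → Prop := Relation.EqvGen SylvStep

/-- #-sylvester adjacency: b u a c ≡ b u c a when a < b ≤ c. -/
def SylvHAdj (w w' : List ℕ) : Prop :=
  ∃ (a b c : ℕ) (u : List ℕ), a < b ∧ b ≤ c ∧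
    w = b :: (u ++ [a, c]) ∧ w' = b :: (u ++ [c, a])

def SylvHStep (w w' : List ℕ) : Prop :=
  ∃ (p s u v : List ℕ), SylvHAdj u v ∧ w = p ++ u ++ s ∧ w' = p ++ v ++ s

def SylvHEquiv : List ℕ → List ℕ → Prop := Relation.EqvGen SylvHStep

/-- The standardized word of `u`: position `i` receives the rank of the letter `u i`
(ties broken from left to right), ranks starting at `1`. -/
def std (u : List ℕ) : List ℕ :=
  (List.range u.length).map fun i =>
    ((List.range u.length).filter fun j =>
      decide (u.getD j 0 < u.getD i 0 ∨ (u.getD j 0 = u.getD i 0 ∧ j < i))).length + 1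

/-- The maximal letter of a word. -/
def wordMax (u : List ℕ) : ℕ := u.foldr max 0

/-- The Schützenberger transformation: reverse and complement each letter w.r.t. max + 1. -/
def schutz (u : List ℕ) : List ℕ := u.reverse.map fun x => wordMax u + 1 - x

/-- Labeled binary trees. -/
inductive BT where
  | leaf : BT
  | node : BT → ℕ → BT → BT
deriving DecidableEq

/-- Leaf insertion into a left binary search tree. -/
def leafInsL : BT → ℕ → BT
  | .leaf, a => .node .leaf a .leaf
  | .node l b r, a => if a < b then .node (leafInsL l a) b r else .node l b (leafInsL r a)

/-- Leaf insertion into a right binary search tree. -/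
def leafInsR : BT → ℕ → BT
  | .leaf, a => .node .leaf a .leaf
  | .node l b r, a => if a ≤ b then .node (leafInsR l a) b r else .node l b (leafInsR r a)

/-- The lower restricted tree `T_{≤ a}` of a right binary search tree. -/
def splitLE : BT → ℕ → BT
  | .leaf, _ => .leaf
  | .node l b r, a => if b ≤ a then .node l b (splitLE r a) else splitLE l a

/-- The higher restricted tree `T_{> a}` of a right binary search tree. -/
def splitGT : BT → ℕ → BT
  | .leaf, _ => .leaf
  | .node l b r, a => if b ≤ a then splitGT r a else .node (splitGT l a) b r

/-- Root insertion into a right binary search tree. -/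
def rootIns (t : BT) (a : ℕ) : BT := .node (splitLE t a) a (splitGT t a)

/-- The left tree of the P-symbol: leaf insertions from left to right. -/
def insL (u : List ℕ) : BT := u.foldl leafInsL .leaf

/-- The right tree of the P-symbol: root insertions from left to right. -/
def insR (u : List ℕ) : BT := u.foldl rootIns .leaf

/-- The P-symbol of a word. -/
def Psymb (u : List ℕ) : BT × BT := (insL u, insR u)

/-- Unlabeled binary trees. -/
inductive UBT where
  | leaf : UBT
  | node : UBT → UBT → UBT
deriving DecidableEq

/-- The shape of a labeled binary tree. -/
def shape : BT → UBT
  | .leaf => .leaf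
  | .node l _ r => .node (shape l) (shape r)

/-- The shape of the P-symbol of a word. -/
def Pshape (u : List ℕ) : UBT × UBT := (shape (insL u), shape (insR u))

/-- Number of internal nodes. -/
def sizeU : UBT → ℕ
  | .leaf => 0
  | .node l r => sizeU l + sizeU r + 1

/-- Orientations of the leaves, from left to right: `true` means right-oriented
(the leaf is the right child of its parent); the parameter is the orientation
assigned if the tree is reduced to a leaf. -/
def loU : UBT → Bool → List Bool
  | .leaf, b => [b]
  | .node l r, _ => loU l false ++ loU r true

/-- Leaf orientations of a labeled binary tree. -/
def loB : BT → Bool → List Bool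
  | .leaf, b => [b]
  | .node l _ r, _ => loB l false ++ loB r true

/-- The canopy: orientations of the leaves except the first and the last one. -/
def canU (t : UBT) : List Bool := ((loU t false).drop 1).dropLast

/-- A pair of twin binary trees: same number of nodes and complementary canopies. -/
def IsTwin (J : UBT × UBT) : Prop :=
  sizeU J.1 = sizeU J.2 ∧ (canU J.1).length = (canU J.2).length ∧
    ∀ i < (canU J.1).length, (canU J.1).getD i false ≠ (canU J.2).getD i false

/-- `σ` is (the word of) a permutation of `{1, …, n}`. -/
def IsPerm (n : ℕ) (σ : List ℕ) : Prop := σ.Perm (List.range' 1 n)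

/-- Covering-type step of the right permutohedron (weak) order: exchange of two
adjacent letters `a < b`. -/
def PermutoStep (σ ν : List ℕ) : Prop :=
  ∃ (p s : List ℕ) (a b : ℕ), a < b ∧ σ = p ++ a :: b :: s ∧ ν = p ++ b :: a :: s

/-- The right permutohedron (weak) order. -/
def PermutoLe : List ℕ → List ℕ → Prop := Relation.ReflTransGen PermutoStep

/-- Baxter permutations: avoiding the generalized patterns 2-41-3 and 3-14-2. -/
def IsBaxterPerm (σ : List ℕ) : Prop :=
  ∀ i j k, i < j → j + 1 < k → k < σ.length →
    ¬(σ.getD (j+1) 0 < σ.getD i 0 ∧ σ.getD i 0 < σ.getD k 0 ∧ σ.getD k 0 < σ.getD j 0) ∧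
    ¬(σ.getD j 0 < σ.getD k 0 ∧ σ.getD k 0 < σ.getD i 0 ∧ σ.getD i 0 < σ.getD (j+1) 0)

/-!
A Baxter step exchanges two adjacent distinct letters of a word, under a condition on four
letters that only involves comparisons `earlier ≤ later` and their negations. Standardization
preserves exactly these comparisons and commutes with exchanging adjacent distinct letters, so
Baxter steps on `u` and on `std u` correspond to each other in both directions. Hence a chain of
steps from `std u` to `std v` lifts to a chain from `u` to some `u'` with `std u' = std v`. Steps
only permute letters, so `u'` and `v` also have the same evaluation, and a word is determined by
its standardization and its evaluation: the letter at a position of rank `r` is the `r`-th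
smallest letter.
-/

open Finset

lemma card_filter_lt_lt_card_filter_lt_iff {α β : Type*} [LinearOrder β] {s : Finset α}
    {f : α → β} {a b : α} (ha : a ∈ s) :
    #{x ∈ s | f x < f a} < #{x ∈ s | f x < f b} ↔ f a < f b := by
  constructor
  · intro h
    by_contra! hba
    exact (card_le_card (monotone_filter_right s fun _ _ hx => hx.trans_le hba)).not_gt h
  · intro hab
    refine card_lt_card ⟨monotone_filter_right s fun _ _ hx => hx.trans hab, fun hsub => ?_⟩
    exact lt_irrefl _ (mem_filter.mp (hsub (mem_filter.mpr ⟨ha, hab⟩))).2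

def stdKey (u : List ℕ) (i : ℕ) : ℕ ×ₗ ℕ := toLex (u.getD i 0, i)

lemma stdKey_lt_stdKey_iff (u : List ℕ) {i j : ℕ} (hij : i < j) :
    stdKey u i < stdKey u j ↔ u.getD i 0 ≤ u.getD j 0 := by
  simp only [stdKey, Prod.Lex.toLex_lt_toLex]
  omega

lemma std_length (u : List ℕ) : (std u).length = u.length := by simp [std]

lemma std_getD (u : List ℕ) {i : ℕ} (hi : i < u.length) :
    (std u).getD i 0 = #{j ∈ range u.length | stdKey u j < stdKey u i} + 1 := by
  rw [std, List.getD_eq_getElem _ _ (by simpa using hi), List.getElem_map, List.getElem_range]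
  simp [stdKey, Prod.Lex.toLex_lt_toLex, Finset.card, Multiset.range]

lemma std_getD_le_std_getD_iff (u : List ℕ) {i j : ℕ} (hij : i < j) (hj : j < u.length) :
    (std u).getD i 0 ≤ (std u).getD j 0 ↔ u.getD i 0 ≤ u.getD j 0 := by
  rw [std_getD u (hij.trans hj), std_getD u hj, add_le_add_iff_right, ← not_lt,
    card_filter_lt_lt_card_filter_lt_iff (mem_range.mpr hj), not_lt, le_iff_lt_or_eq,
    stdKey_lt_stdKey_iff u hij]
  simp [stdKey, hij.ne]

lemma countP_eq_card_filter_range (u : List ℕ) (p : ℕ → Prop) [DecidablePred p] :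
    u.countP (fun a => decide (p a)) = #{j ∈ range u.length | p (u.getD j 0)} := by
  have hu : u = (List.range u.length).map (u.getD · 0) :=
    List.ext_getElem (by simp) fun i h _ => by
      simp only [List.getElem_map, List.getElem_range, List.getD_eq_getElem _ _ h]
  conv_lhs => rw [hu]
  rw [← Multiset.coe_countP, ← Multiset.map_coe, Multiset.countP_map]
  rfl

lemma countP_lt_lt_std_getD (u : List ℕ) {i : ℕ} (hi : i < u.length) :
    u.countP (· < u.getD i 0) < (std u).getD i 0 := by
  rw [std_getD u hi, Nat.lt_add_one_iff, countP_eq_card_filter_range]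
  refine card_le_card (monotone_filter_right _ fun j _ hj => ?_)
  simp only [stdKey, Prod.Lex.toLex_lt_toLex]
  exact Or.inl hj

lemma std_getD_le_countP_le (u : List ℕ) {i : ℕ} (hi : i < u.length) :
    (std u).getD i 0 ≤ u.countP (· ≤ u.getD i 0) := by
  rw [std_getD u hi, Nat.add_one_le_iff, countP_eq_card_filter_range]
  refine card_lt_card ⟨monotone_filter_right _ fun j _ hj => ?_, fun hsub => ?_⟩
  · simp only [stdKey, Prod.Lex.toLex_lt_toLex] at hj
    omega
  · simpa using hsub (mem_filter.mpr ⟨mem_range.mpr hi, le_rfl⟩)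

/-- If `v i < u i` had the same rank `r`, then `r ≤ #{≤ v i} ≤ #{< u i} < r`, counting in
`v` and in its rearrangement `u`. -/
lemma getD_le_getD_of_std_eq_of_perm {u v : List ℕ} (hstd : std u = std v) (hperm : u.Perm v)
    {i : ℕ} (hi : i < u.length) : u.getD i 0 ≤ v.getD i 0 := by
  by_contra! hlt
  have h1 := countP_lt_lt_std_getD u hi
  have h2 := std_getD_le_countP_le v (hperm.length_eq ▸ hi)
  have h3 : v.countP (· ≤ v.getD i 0) ≤ v.countP (· < u.getD i 0) :=
    List.countP_mono_left fun x _ hx => by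
      simp only [decide_eq_true_eq] at hx ⊢
      exact hx.trans_lt hlt
  rw [hstd, hperm.countP_eq] at h1
  omega

lemma eq_of_std_eq_of_perm {u v : List ℕ} (hstd : std u = std v) (hperm : u.Perm v) : u = v := by
  refine List.ext_getElem hperm.length_eq fun i hu hv => ?_
  rw [← List.getD_eq_getElem _ 0 hu, ← List.getD_eq_getElem _ 0 hv]
  exact le_antisymm (getD_le_getD_of_std_eq_of_perm hstd hperm hu)
    (getD_le_getD_of_std_eq_of_perm hstd.symm hperm.symm hv)

def swapAdj (u : List ℕ) (j : ℕ) : List ℕ :=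
  u.take j ++ u.getD (j + 1) 0 :: u.getD j 0 :: u.drop (j + 2)

section swapAdj

variable {u : List ℕ} {j : ℕ}

lemma length_swapAdj (hj : j + 1 < u.length) : (swapAdj u j).length = u.length := by
  simp only [swapAdj, List.length_append, List.length_take, List.length_cons, List.length_drop]
  omega

lemma swapAdj_append_cons_cons (P Q : List ℕ) (y z : ℕ) :
    swapAdj (P ++ y :: z :: Q) P.length = P ++ z :: y :: Q := by
  simp [swapAdj, List.drop_append, show P.length + 2 - P.length = 2 by omega]

lemma swap_lt_iff {n : ℕ} (hj : j + 1 < n) (k : ℕ) : Equiv.swap j (j + 1) k < n ↔ k < n := by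
  rw [Equiv.swap_apply_def]
  split_ifs <;> omega

lemma getD_swapAdj (hj : j + 1 < u.length) (k : ℕ) :
    (swapAdj u j).getD k 0 = u.getD (Equiv.swap j (j + 1) k) 0 := by
  have htake : (u.take j).length = j := List.length_take_of_le (by omega)
  rw [swapAdj, Equiv.swap_apply_def]
  rcases lt_trichotomy k j with hk | rfl | hk
  · rw [List.getD_append _ _ _ _ (by omega), if_neg hk.ne, if_neg (by omega)]
    simp [List.getElem?_take_of_lt hk]
  · rw [List.getD_append_right _ _ _ _ (by omega), htake]
    simp
  · rw [List.getD_append_right _ _ _ _ (by omega), htake, if_neg hk.ne']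
    split_ifs with hk1
    · simp [hk1]
    · obtain ⟨m, rfl⟩ : ∃ m, k = j + 2 + m := ⟨k - (j + 2), by omega⟩
      rw [show j + 2 + m - j = m + 2 by omega]
      simp [add_comm]

lemma stdKey_swapAdj_lt_iff (hj : j + 1 < u.length) (hne : u.getD j 0 ≠ u.getD (j + 1) 0)
    (a b : ℕ) : stdKey (swapAdj u j) a < stdKey (swapAdj u j) b ↔
      stdKey u (Equiv.swap j (j + 1) a) < stdKey u (Equiv.swap j (j + 1) b) := by
  simp only [stdKey, Prod.Lex.toLex_lt_toLex, getD_swapAdj hj]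
  rw [Equiv.swap_apply_def, Equiv.swap_apply_def]
  split_ifs <;> subst_vars <;> omega

lemma std_swapAdj (hj : j + 1 < u.length) (hne : u.getD j 0 ≠ u.getD (j + 1) 0) :
    std (swapAdj u j) = swapAdj (std u) j := by
  have hj' : j + 1 < (std u).length := by rwa [std_length]
  refine List.ext_getElem (by rw [std_length, length_swapAdj hj, length_swapAdj hj', std_length])
    fun i h h' => ?_
  have hi : i < u.length := by rwa [std_length, length_swapAdj hj] at h
  rw [← List.getD_eq_getElem _ 0 h', ← List.getD_eq_getElem _ 0 h, getD_swapAdj hj',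
    std_getD _ (by rwa [length_swapAdj hj]), std_getD _ ((swap_lt_iff hj i).mpr hi),
    length_swapAdj hj]
  congr 1
  refine Finset.card_equiv (Equiv.swap j (j + 1)) fun k => ?_
  simp only [Finset.mem_filter, Finset.mem_range, swap_lt_iff hj, stdKey_swapAdj_lt_iff hj hne]

end swapAdj

section Factorization

variable {α : Type*} (d : α)

lemma getD_append_cons (P Q : List α) (y : α) : (P ++ y :: Q).getD P.length d = y := by
  simp

lemma getD_append_cons_cons (P Q : List α) (y z : α) :
    (P ++ y :: z :: Q).getD (P.length + 1) d = z := by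
  simp

lemma drop_eq_take_append_getD_cons (w : List α) {m k : ℕ} (hmk : m ≤ k) (hk : k < w.length) :
    w.drop m = (w.drop m).take (k - m) ++ w.getD k d :: w.drop (k + 1) := by
  conv_lhs => rw [← List.take_append_drop (k - m) (w.drop m)]
  rw [List.drop_drop, show m + (k - m) = k by omega, List.getD_eq_getElem _ _ hk,
    List.drop_eq_getElem_cons hk]

lemma exists_eq_append_getD_cons {w : List α} {i j k : ℕ} (hij : i < j) (hjk : j + 1 < k)
    (hk : k < w.length) :
    ∃ p A B s, w = p ++ w.getD i d :: A ++ w.getD j d :: w.getD (j + 1) d :: B ++ w.getD k d :: s ∧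
      (p ++ w.getD i d :: A).length = j := by
  refine ⟨w.take i, (w.drop (i + 1)).take (j - (i + 1)), (w.drop (j + 2)).take (k - (j + 2)),
    w.drop (k + 1), ?_, ?_⟩
  · conv_lhs => rw [← List.take_append_drop i w,
      drop_eq_take_append_getD_cons d w (le_refl i) (by omega),
      drop_eq_take_append_getD_cons d w (show i + 1 ≤ j by omega) (by omega),
      drop_eq_take_append_getD_cons d w (le_refl (j + 1)) (by omega),
      drop_eq_take_append_getD_cons d w (show j + 2 ≤ k by omega) hk]
    simp
  · simp only [List.length_append, List.length_take, List.length_cons, List.length_drop]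
    omega

end Factorization

lemma exists_append_cons_iff_getD {P : ℕ → ℕ → ℕ → ℕ → Prop} {w w' : List ℕ} :
    (∃ p A B s x y z t, P x y z t ∧ w = p ++ x :: A ++ y :: z :: B ++ t :: s ∧
        w' = p ++ x :: A ++ z :: y :: B ++ t :: s) ↔
      ∃ i j k, i < j ∧ j + 1 < k ∧ k < w.length ∧
        P (w.getD i 0) (w.getD j 0) (w.getD (j + 1) 0) (w.getD k 0) ∧ w' = swapAdj w j := by
  constructor
  · rintro ⟨p, A, B, s, x, y, z, t, hP, rfl, rfl⟩
    have e1 : p ++ x :: A ++ y :: z :: B ++ t :: s = p ++ x :: (A ++ y :: z :: B ++ t :: s) := by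
      simp
    have e2 : p ++ x :: A ++ y :: z :: B ++ t :: s = (p ++ x :: A) ++ y :: z :: (B ++ t :: s) := by
      simp
    refine ⟨p.length, (p ++ x :: A).length, (p ++ x :: A ++ y :: z :: B).length,
      by simp, ?_, by simp, ?_, ?_⟩
    · simp only [List.length_append, List.length_cons]
      omega
    · rwa [getD_append_cons, e2, getD_append_cons, getD_append_cons_cons, ← e2, e1,
        getD_append_cons]
    · rw [e2, swapAdj_append_cons_cons]
      simp
  · rintro ⟨i, j, k, hij, hjk, hk, hP, rfl⟩
    obtain ⟨p, A, B, s, hw, hj⟩ := exists_eq_append_getD_cons 0 hij hjk hk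
    generalize w.getD i 0 = x, w.getD j 0 = y, w.getD (j + 1) 0 = z, w.getD k 0 = t at hw hj hP
    subst hw hj
    refine ⟨p, A, B, s, x, y, z, t, hP, rfl, ?_⟩
    rw [show p ++ x :: A ++ y :: z :: B ++ t :: s = (p ++ x :: A) ++ y :: z :: (B ++ t :: s) by
      simp, swapAdj_append_cons_cons]
    simp

/-- The condition on the letters `x, y, z, t` at positions `i < j, j + 1 < k` under which `y z`
may be exchanged: its two disjuncts are the two Baxter relations, `c u a d v b` with
`x, y, z, t = c, a, d, b` and `b u d a v c` with `x, y, z, t = b, d, a, c`. -/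
def BaxterPattern (x y z t : ℕ) : Prop := (y ≤ t ∧ t < x ∧ x ≤ z) ∨ (z < x ∧ x ≤ t ∧ t < y)

lemma BaxterPattern.ne {x y z t : ℕ} (h : BaxterPattern x y z t) : y ≠ z := by
  unfold BaxterPattern at h
  omega

lemma baxterStep_iff {w w' : List ℕ} :
    BaxterStep w w' ↔ ∃ p A B s x y z t, BaxterPattern x y z t ∧
      w = p ++ x :: A ++ y :: z :: B ++ t :: s ∧ w' = p ++ x :: A ++ z :: y :: B ++ t :: s := by
  constructor
  · rintro ⟨p, s, _, _, ⟨a, b, c, d, A, B, h₁, h₂, h₃, rfl, rfl⟩ |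
      ⟨a, b, c, d, A, B, h₁, h₂, h₃, rfl, rfl⟩, rfl, rfl⟩
    · exact ⟨p, A, B, s, c, a, d, b, Or.inl ⟨h₁, h₂, h₃⟩, by simp, by simp⟩
    · exact ⟨p, A, B, s, b, d, a, c, Or.inr ⟨h₁, h₂, h₃⟩, by simp, by simp⟩
  · rintro ⟨p, A, B, s, x, y, z, t, ⟨h₁, h₂, h₃⟩ | ⟨h₁, h₂, h₃⟩, rfl, rfl⟩
    · exact ⟨p, s, _, _, Or.inl ⟨y, t, x, z, A, B, h₁, h₂, h₃, rfl, rfl⟩, by simp, by simp⟩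
    · exact ⟨p, s, _, _, Or.inr ⟨z, x, t, y, A, B, h₁, h₂, h₃, rfl, rfl⟩, by simp, by simp⟩

lemma symmGen_baxterStep_iff {w w' : List ℕ} :
    Relation.SymmGen BaxterStep w w' ↔ ∃ i j k, i < j ∧ j + 1 < k ∧ k < w.length ∧
      (BaxterPattern (w.getD i 0) (w.getD j 0) (w.getD (j + 1) 0) (w.getD k 0) ∨
        BaxterPattern (w.getD i 0) (w.getD (j + 1) 0) (w.getD j 0) (w.getD k 0)) ∧
      w' = swapAdj w j := by
  rw [← exists_append_cons_iff_getD
      (P := fun x y z t => BaxterPattern x y z t ∨ BaxterPattern x z y t),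
    Relation.SymmGen, baxterStep_iff, baxterStep_iff]
  constructor
  · rintro (⟨p, A, B, s, x, y, z, t, h, rfl, rfl⟩ | ⟨p, A, B, s, x, y, z, t, h, rfl, rfl⟩)
    · exact ⟨p, A, B, s, x, y, z, t, Or.inl h, rfl, rfl⟩
    · exact ⟨p, A, B, s, x, z, y, t, Or.inr h, rfl, rfl⟩
  · rintro ⟨p, A, B, s, x, y, z, t, h | h, rfl, rfl⟩
    · exact Or.inl ⟨p, A, B, s, x, y, z, t, h, rfl, rfl⟩
    · exact Or.inr ⟨p, A, B, s, x, z, y, t, h, rfl, rfl⟩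

/-- Each comparison in `BaxterPattern` is `earlier ≤ later` or its negation, and
standardization preserves these. -/
lemma baxterPattern_std_iff (u : List ℕ) {i j j' k : ℕ} (hij' : i < j') (hj'k : j' < k)
    (hjk : j < k) (hk : k < u.length) :
    BaxterPattern ((std u).getD i 0) ((std u).getD j 0) ((std u).getD j' 0) ((std u).getD k 0) ↔
      BaxterPattern (u.getD i 0) (u.getD j 0) (u.getD j' 0) (u.getD k 0) := by
  simp only [BaxterPattern, ← not_le, std_getD_le_std_getD_iff u hij' (hj'k.trans hk),
    std_getD_le_std_getD_iff u (hij'.trans hj'k) hk, std_getD_le_std_getD_iff u hjk hk]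

lemma baxterPattern_or_swap_std_iff (u : List ℕ) {i j k : ℕ} (hij : i < j) (hjk : j + 1 < k)
    (hk : k < u.length) :
    (BaxterPattern ((std u).getD i 0) ((std u).getD j 0) ((std u).getD (j + 1) 0)
        ((std u).getD k 0) ∨
      BaxterPattern ((std u).getD i 0) ((std u).getD (j + 1) 0) ((std u).getD j 0)
        ((std u).getD k 0)) ↔
    (BaxterPattern (u.getD i 0) (u.getD j 0) (u.getD (j + 1) 0) (u.getD k 0) ∨
      BaxterPattern (u.getD i 0) (u.getD (j + 1) 0) (u.getD j 0) (u.getD k 0)) := by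
  rw [baxterPattern_std_iff u (by omega) hjk (by omega) hk,
    baxterPattern_std_iff u hij (by omega) hjk hk]

lemma ne_of_baxterPattern_or {x y z t : ℕ}
    (h : BaxterPattern x y z t ∨ BaxterPattern x z y t) : y ≠ z :=
  h.elim BaxterPattern.ne fun h => h.ne.symm

lemma symmGen_baxterStep_std {w w' : List ℕ} (h : Relation.SymmGen BaxterStep w w') :
    Relation.SymmGen BaxterStep (std w) (std w') := by
  obtain ⟨i, j, k, hij, hjk, hk, hpat, rfl⟩ := symmGen_baxterStep_iff.mp h
  rw [std_swapAdj (by omega) (ne_of_baxterPattern_or hpat)]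
  exact symmGen_baxterStep_iff.mpr ⟨i, j, k, hij, hjk, by rwa [std_length],
    (baxterPattern_or_swap_std_iff w hij hjk hk).mpr hpat, rfl⟩

lemma exists_symmGen_baxterStep_std_eq {u τ : List ℕ}
    (h : Relation.SymmGen BaxterStep (std u) τ) :
    ∃ u', Relation.SymmGen BaxterStep u u' ∧ std u' = τ := by
  obtain ⟨i, j, k, hij, hjk, hk, hpat, rfl⟩ := symmGen_baxterStep_iff.mp h
  rw [std_length] at hk
  rw [baxterPattern_or_swap_std_iff u hij hjk hk] at hpat
  exact ⟨swapAdj u j, symmGen_baxterStep_iff.mpr ⟨i, j, k, hij, hjk, hk, hpat, rfl⟩,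
    std_swapAdj (by omega) (ne_of_baxterPattern_or hpat)⟩

lemma BaxterStep.perm {w w' : List ℕ} (h : BaxterStep w w') : w.Perm w' := by
  obtain ⟨p, A, B, s, x, y, z, t, -, rfl, rfl⟩ := baxterStep_iff.mp h
  simp only [List.append_assoc, List.cons_append]
  exact (((List.Perm.swap z y _).append_left A).cons x).append_left p

lemma BaxterEquiv.perm {u v : List ℕ} (h : BaxterEquiv u v) : u.Perm v :=
  (List.Perm.eqv ℕ).eqvGen_iff.mp (Relation.EqvGen.mono (fun _ _ => BaxterStep.perm) _ _ h)

lemma baxterEquiv_iff_reflTransGen {u v : List ℕ} :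
    BaxterEquiv u v ↔ Relation.ReflTransGen (Relation.SymmGen BaxterStep) u v := by
  rw [BaxterEquiv, Relation.EqvGen.reflTransGen_symmGen]

lemma BaxterEquiv.map_std {u v : List ℕ} (h : BaxterEquiv u v) : BaxterEquiv (std u) (std v) :=
  baxterEquiv_iff_reflTransGen.mpr <|
    Relation.ReflTransGen.lift (p := Relation.SymmGen BaxterStep) std
      (fun _ _ => symmGen_baxterStep_std) _ _ (baxterEquiv_iff_reflTransGen.mp h)

lemma exists_baxterEquiv_std_eq {u τ : List ℕ} (h : BaxterEquiv (std u) τ) :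
    ∃ u', BaxterEquiv u u' ∧ std u' = τ := by
  simp only [baxterEquiv_iff_reflTransGen] at h ⊢
  induction h with
  | refl => exact ⟨u, .refl, rfl⟩
  | tail _ hστ ih =>
    obtain ⟨u₁, hu₁, rfl⟩ := ih
    obtain ⟨u₂, hu₂, rfl⟩ := exists_symmGen_baxterStep_std_eq hστ
    exact ⟨u₂, hu₁.tail hu₂, rfl⟩

/-- the Baxter equivalence is compatible with the
destandardization process. -/
theorem baxter_compatible_with_destandardization (u v : List ℕ) :
    BaxterEquiv u v ↔ (BaxterEquiv (std u) (std v) ∧ ∀ a, u.count a = v.count a) := by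
  refine ⟨fun h => ⟨h.map_std, fun a => h.perm.count_eq a⟩, fun ⟨hstd, hcount⟩ => ?_⟩
  obtain ⟨u', hu', hstd'⟩ := exists_baxterEquiv_std_eq hstd
  have hperm : u'.Perm v := hu'.perm.symm.trans (List.perm_iff_count.mpr hcount)
  rwa [← eq_of_std_eq_of_perm hstd' hperm]
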